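/- Consider the following triples (ℂ², E2, E3), where e1 = (1,0), e2 = (0,1): (I) E2 = span{e1⊗e1, e2⊗e2}, E3 = span{e1⊗e1⊗e1, e2⊗e2⊗e2}; (II) E2 = span{e1⊗e2, e2⊗e1}, E3 = span{e1⊗e2⊗e1, e2⊗e1⊗e2}; (III)_λ for λ ∈ ℂ, λ ≠ 0: E2 = span{e1⊗e1, e2⊗e1 + λ e1⊗e2}, E3 = span{e1⊗e1⊗e1, e2⊗e1⊗e1 + λ e1⊗e2⊗e1 + λ² e1⊗e1⊗e2}; (IV) E2 = span{e1⊗e1, e2⊗e1}, E3 = span{e1⊗e1⊗e1, e2⊗e1⊗e1}; (V) E2 = span{e1⊗e1, e1⊗e2}, E3 = span{e1⊗e1⊗e1, e1⊗e1⊗e2}. Then these triples are mutually non-isomorphic: no two triples from distinct families (I), (II), (III), (IV), (V) are isomorphic, and (III)_λ is isomorphic to (III)_μ only if λ = μ. -/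
import Mathlib


open TensorProduct

namespace Stmt10

noncomputable abbrev V : Type := Fin 2 → ℂ

noncomputable def e1 : V := ![1, 0]
noncomputable def e2 : V := ![0, 1]

/-- Isomorphism of triples `(ℂ², E2, E3)` and `(ℂ², E2', E3')`: an invertible linear map
`θ : ℂ² → ℂ²` with `(θ⊗θ)(E2) = E2'` and `(θ⊗θ⊗θ)(E3) = E3'`. -/
def TripleIso (E2 E2' : Submodule ℂ (V ⊗[ℂ] V))
    (E3 E3' : Submodule ℂ ((V ⊗[ℂ] V) ⊗[ℂ] V)) : Prop :=
  ∃ θ : V ≃ₗ[ℂ] V,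
    Submodule.map (TensorProduct.map θ.toLinearMap θ.toLinearMap) E2 = E2' ∧
    Submodule.map (TensorProduct.map
      (TensorProduct.map θ.toLinearMap θ.toLinearMap) θ.toLinearMap) E3 = E3'

noncomputable def E2I : Submodule ℂ (V ⊗[ℂ] V) :=
  Submodule.span ℂ {e1 ⊗ₜ[ℂ] e1, e2 ⊗ₜ[ℂ] e2}
noncomputable def E3I : Submodule ℂ ((V ⊗[ℂ] V) ⊗[ℂ] V) :=
  Submodule.span ℂ {(e1 ⊗ₜ[ℂ] e1) ⊗ₜ[ℂ] e1, (e2 ⊗ₜ[ℂ] e2) ⊗ₜ[ℂ] e2}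

noncomputable def E2II : Submodule ℂ (V ⊗[ℂ] V) :=
  Submodule.span ℂ {e1 ⊗ₜ[ℂ] e2, e2 ⊗ₜ[ℂ] e1}
noncomputable def E3II : Submodule ℂ ((V ⊗[ℂ] V) ⊗[ℂ] V) :=
  Submodule.span ℂ {(e1 ⊗ₜ[ℂ] e2) ⊗ₜ[ℂ] e1, (e2 ⊗ₜ[ℂ] e1) ⊗ₜ[ℂ] e2}

noncomputable def E2III (l : ℂ) : Submodule ℂ (V ⊗[ℂ] V) :=
  Submodule.span ℂ {e1 ⊗ₜ[ℂ] e1, e2 ⊗ₜ[ℂ] e1 + l • (e1 ⊗ₜ[ℂ] e2)}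
noncomputable def E3III (l : ℂ) : Submodule ℂ ((V ⊗[ℂ] V) ⊗[ℂ] V) :=
  Submodule.span ℂ {(e1 ⊗ₜ[ℂ] e1) ⊗ₜ[ℂ] e1,
    (e2 ⊗ₜ[ℂ] e1) ⊗ₜ[ℂ] e1 + l • ((e1 ⊗ₜ[ℂ] e2) ⊗ₜ[ℂ] e1)
      + l ^ 2 • ((e1 ⊗ₜ[ℂ] e1) ⊗ₜ[ℂ] e2)}

noncomputable def E2IV : Submodule ℂ (V ⊗[ℂ] V) :=
  Submodule.span ℂ {e1 ⊗ₜ[ℂ] e1, e2 ⊗ₜ[ℂ] e1}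
noncomputable def E3IV : Submodule ℂ ((V ⊗[ℂ] V) ⊗[ℂ] V) :=
  Submodule.span ℂ {(e1 ⊗ₜ[ℂ] e1) ⊗ₜ[ℂ] e1, (e2 ⊗ₜ[ℂ] e1) ⊗ₜ[ℂ] e1}

noncomputable def E2V : Submodule ℂ (V ⊗[ℂ] V) :=
  Submodule.span ℂ {e1 ⊗ₜ[ℂ] e1, e1 ⊗ₜ[ℂ] e2}
noncomputable def E3V : Submodule ℂ ((V ⊗[ℂ] V) ⊗[ℂ] V) :=
  Submodule.span ℂ {(e1 ⊗ₜ[ℂ] e1) ⊗ₜ[ℂ] e1, (e1 ⊗ₜ[ℂ] e1) ⊗ₜ[ℂ] e2}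

noncomputable def φ (i j : Fin 2) : (V ⊗[ℂ] V) →ₗ[ℂ] ℂ :=
  TensorProduct.lift ((LinearMap.mul ℂ ℂ).compl₁₂ (LinearMap.proj i) (LinearMap.proj j))

@[simp] lemma φ_tmul (i j : Fin 2) (x y : V) : φ i j (x ⊗ₜ[ℂ] y) = x i * y j := by simp [φ]
@[simp] lemma e1_0 : e1 0 = 1 := by simp [e1]
@[simp] lemma e1_1 : e1 1 = 0 := by simp [e1]
@[simp] lemma e2_0 : e2 0 = 0 := by simp [e2]
@[simp] lemma e2_1 : e2 1 = 1 := by simp [e2]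

lemma det_ne (θ : V ≃ₗ[ℂ] V) : θ e1 0 * θ e2 1 - θ e2 0 * θ e1 1 ≠ 0 := by
  have h : IsUnit (LinearMap.det θ.toLinearMap) := LinearEquiv.isUnit_det' θ
  rw [← LinearMap.det_toMatrix (Pi.basisFun ℂ (Fin 2)), Matrix.det_fin_two] at h
  have h1 : (Pi.single 0 1 : V) = e1 := by funext i; fin_cases i <;> simp [e1]
  have h2 : (Pi.single 1 1 : V) = e2 := by funext i; fin_cases i <;> simp [e2]
  simp [LinearMap.toMatrix_apply, Pi.basisFun_apply, h1, h2] at h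
  exact h

lemma memII {z : V ⊗[ℂ] V} (h : z ∈ E2II) : φ 0 0 z = 0 ∧ φ 1 1 z = 0 := by
  rw [E2II, Submodule.mem_span_pair] at h; obtain ⟨s, t, rfl⟩ := h; simp

lemma memIV {z : V ⊗[ℂ] V} (h : z ∈ E2IV) : φ 0 1 z = 0 ∧ φ 1 1 z = 0 := by
  rw [E2IV, Submodule.mem_span_pair] at h; obtain ⟨s, t, rfl⟩ := h; simp

lemma memV {z : V ⊗[ℂ] V} (h : z ∈ E2V) : φ 1 0 z = 0 ∧ φ 1 1 z = 0 := by
  rw [E2V, Submodule.mem_span_pair] at h; obtain ⟨s, t, rfl⟩ := h; simp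

lemma memIII {m : ℂ} {z : V ⊗[ℂ] V} (h : z ∈ E2III m) :
    φ 0 1 z = m * φ 1 0 z ∧ φ 1 1 z = 0 := by
  rw [E2III, Submodule.mem_span_pair] at h; obtain ⟨s, t, rfl⟩ := h; simp [mul_comm]

lemma mem_fst {u v : V ⊗[ℂ] V} : u ∈ Submodule.span ℂ {u, v} :=
  Submodule.subset_span (Set.mem_insert _ _)
lemma mem_snd {u v : V ⊗[ℂ] V} : v ∈ Submodule.span ℂ {u, v} :=
  Submodule.subset_span (Set.mem_insert_of_mem _ rfl)

lemma img_mem {F : V ⊗[ℂ] V →ₗ[ℂ] V ⊗[ℂ] V} {S T : Submodule ℂ (V ⊗[ℂ] V)}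
    (h : Submodule.map F S = T) {x : V ⊗[ℂ] V} (hx : x ∈ S) : F x ∈ T :=
  h ▸ Submodule.mem_map_of_mem hx

theorem stmt_10 :
    (¬ TripleIso E2I E2II E3I E3II) ∧
    (∀ l : ℂ, l ≠ 0 → ¬ TripleIso E2I (E2III l) E3I (E3III l)) ∧
    (¬ TripleIso E2I E2IV E3I E3IV) ∧
    (¬ TripleIso E2I E2V E3I E3V) ∧
    (∀ l : ℂ, l ≠ 0 → ¬ TripleIso E2II (E2III l) E3II (E3III l)) ∧
    (¬ TripleIso E2II E2IV E3II E3IV) ∧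
    (¬ TripleIso E2II E2V E3II E3V) ∧
    (∀ l : ℂ, l ≠ 0 → ¬ TripleIso (E2III l) E2IV (E3III l) E3IV) ∧
    (∀ l : ℂ, l ≠ 0 → ¬ TripleIso (E2III l) E2V (E3III l) E3V) ∧
    (¬ TripleIso E2IV E2V E3IV E3V) ∧
    (∀ l m : ℂ, l ≠ 0 → m ≠ 0 →
      TripleIso (E2III l) (E2III m) (E3III l) (E3III m) → l = m) := by
  refine ⟨?_, ?_, ?_, ?_, ?_, ?_, ?_, ?_, ?_, ?_, ?_⟩
  · -- I vs II
    rintro ⟨θ, h2, -⟩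
    have H1 := memII (img_mem h2 (show _ ∈ E2I from mem_fst))
    simp only [map_add, map_smul, TensorProduct.map_tmul, φ_tmul, LinearEquiv.coe_coe, smul_eq_mul] at H1
    have ha := mul_self_eq_zero.mp H1.1
    have hc := mul_self_eq_zero.mp H1.2
    exact det_ne θ (by rw [ha, hc]; ring)
  · -- I vs III
    intro l hl
    rintro ⟨θ, h2, -⟩
    have H1 := memIII (img_mem h2 (show _ ∈ E2I from mem_fst))
    have H2 := memIII (img_mem h2 (show _ ∈ E2I from mem_snd))
    simp only [map_add, map_smul, TensorProduct.map_tmul, φ_tmul, LinearEquiv.coe_coe, smul_eq_mul] at H1 H2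
    have hc := mul_self_eq_zero.mp H1.2
    have hd := mul_self_eq_zero.mp H2.2
    exact det_ne θ (by rw [hc, hd]; ring)
  · -- I vs IV
    rintro ⟨θ, h2, -⟩
    have H1 := memIV (img_mem h2 (show _ ∈ E2I from mem_fst))
    have H2 := memIV (img_mem h2 (show _ ∈ E2I from mem_snd))
    simp only [map_add, map_smul, TensorProduct.map_tmul, φ_tmul, LinearEquiv.coe_coe, smul_eq_mul] at H1 H2
    have hc := mul_self_eq_zero.mp H1.2
    have hd := mul_self_eq_zero.mp H2.2
    exact det_ne θ (by rw [hc, hd]; ring)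
  · -- I vs V
    rintro ⟨θ, h2, -⟩
    have H1 := memV (img_mem h2 (show _ ∈ E2I from mem_fst))
    have H2 := memV (img_mem h2 (show _ ∈ E2I from mem_snd))
    simp only [map_add, map_smul, TensorProduct.map_tmul, φ_tmul, LinearEquiv.coe_coe, smul_eq_mul] at H1 H2
    have hc := mul_self_eq_zero.mp H1.2
    have hd := mul_self_eq_zero.mp H2.2
    exact det_ne θ (by rw [hc, hd]; ring)
  · -- II vs III
    intro l hl
    rintro ⟨θ, h2, -⟩
    have H1 := memIII (img_mem h2 (show _ ∈ E2II from mem_fst))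
    have H2 := memIII (img_mem h2 (show _ ∈ E2II from mem_snd))
    simp only [map_add, map_smul, TensorProduct.map_tmul, φ_tmul, LinearEquiv.coe_coe, smul_eq_mul] at H1 H2
    apply det_ne θ
    rcases mul_eq_zero.mp H1.2 with hc | hd
    · have h0 : l * (θ e2 1 * θ e1 0) = 0 := by
        rw [← H2.1, hc]; ring
      have hda := (mul_eq_zero.mp h0).resolve_left hl
      linear_combination hda - θ e2 0 * hc
    · have h0 : l * (θ e1 1 * θ e2 0) = 0 := by
        rw [← H1.1, hd]; ring
      have hcb := (mul_eq_zero.mp h0).resolve_left hl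
      linear_combination θ e1 0 * hd - hcb
  · -- II vs IV
    rintro ⟨θ, h2, -⟩
    have H1 := memIV (img_mem h2 (show _ ∈ E2II from mem_fst))
    have H2 := memIV (img_mem h2 (show _ ∈ E2II from mem_snd))
    simp only [map_add, map_smul, TensorProduct.map_tmul, φ_tmul, LinearEquiv.coe_coe, smul_eq_mul] at H1 H2
    exact det_ne θ (by linear_combination H1.1 - H2.1)
  · -- II vs V
    rintro ⟨θ, h2, -⟩
    have H1 := memV (img_mem h2 (show _ ∈ E2II from mem_fst))
    have H2 := memV (img_mem h2 (show _ ∈ E2II from mem_snd))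
    simp only [map_add, map_smul, TensorProduct.map_tmul, φ_tmul, LinearEquiv.coe_coe, smul_eq_mul] at H1 H2
    exact det_ne θ (by linear_combination H2.1 - H1.1)
  · -- III vs IV
    intro l hl
    rintro ⟨θ, h2, -⟩
    have H1 := memIV (img_mem h2 (show _ ∈ E2III l from mem_fst))
    have H2 := memIV (img_mem h2 (show _ ∈ E2III l from mem_snd))
    simp only [map_add, map_smul, TensorProduct.map_tmul, φ_tmul, LinearEquiv.coe_coe, smul_eq_mul] at H1 H2
    have hc := mul_self_eq_zero.mp H1.2
    have h0 : l * (θ e1 0 * θ e2 1) = 0 := by linear_combination H2.1 - θ e2 0 * hc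
    have had := (mul_eq_zero.mp h0).resolve_left hl
    exact det_ne θ (by linear_combination had - θ e2 0 * hc)
  · -- III vs V
    intro l hl
    rintro ⟨θ, h2, -⟩
    have H1 := memV (img_mem h2 (show _ ∈ E2III l from mem_fst))
    have H2 := memV (img_mem h2 (show _ ∈ E2III l from mem_snd))
    simp only [map_add, map_smul, TensorProduct.map_tmul, φ_tmul, LinearEquiv.coe_coe, smul_eq_mul] at H1 H2
    have hc := mul_self_eq_zero.mp H1.2
    have hda : θ e2 1 * θ e1 0 = 0 := by linear_combination H2.1 - (l * θ e2 0) * hc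
    exact det_ne θ (by linear_combination hda - θ e2 0 * hc)
  · -- IV vs V
    rintro ⟨θ, h2, -⟩
    have H1 := memV (img_mem h2 (show _ ∈ E2IV from mem_fst))
    have H2 := memV (img_mem h2 (show _ ∈ E2IV from mem_snd))
    simp only [map_add, map_smul, TensorProduct.map_tmul, φ_tmul, LinearEquiv.coe_coe, smul_eq_mul] at H1 H2
    have hc := mul_self_eq_zero.mp H1.2
    exact det_ne θ (by linear_combination H2.1 - θ e2 0 * hc)
  · -- III l vs III m
    intro l m hl hm
    rintro ⟨θ, h2, -⟩
    have H1 := memIII (img_mem h2 (show _ ∈ E2III l from mem_fst))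
    have H2 := memIII (img_mem h2 (show _ ∈ E2III l from mem_snd))
    simp only [map_add, map_smul, TensorProduct.map_tmul, φ_tmul, LinearEquiv.coe_coe, smul_eq_mul] at H1 H2
    have hc := mul_self_eq_zero.mp H1.2
    have had : θ e1 0 * θ e2 1 ≠ 0 := by
      intro h
      exact det_ne θ (by linear_combination h - θ e2 0 * hc)
    have h0 : (l - m) * (θ e1 0 * θ e2 1) = 0 := by
      linear_combination H2.1 - θ e2 0 * hc + m * l * θ e2 0 * hc
    have := (mul_eq_zero.mp h0).resolve_right had
    exact sub_eq_zero.mp this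

end Stmt10
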